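/- arXiv:2210.14170 — 3 statements merged into one kernel-verified Lean document; each statement's English description precedes it below -/
import Mathlib

section
/- For quaternion vectors x, y ∈ ℍ^d, the outer products satisfy x x* = y y* if and only if there exists a unit quaternion q (|q| = 1) such that x = y·q (entrywise right multiplication by q). -/
open Quaternion

/-- Outer products `x x* = y y*` of quaternion vectors agree iff the vectors differ
by a global right unit-quaternion phase factor. -/
theorem outer_eq_iff_right_phase {d : ℕ} (x y : Fin d → ℍ[ℝ]) :
    (∀ i j, x i * star (x j) = y i * star (y j)) ↔
      ∃ q : ℍ[ℝ], ‖q‖ = 1 ∧ ∀ i, x i = y i * q := by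
  constructor
  · intro h
    by_cases hy : ∀ i, y i = 0
    · refine ⟨1, by simp, fun i => ?_⟩
      have h0 := h i i
      rw [hy i] at h0
      simp only [zero_mul] at h0
      rcases mul_eq_zero.mp h0 with h' | h'
      · simp [h', hy i]
      · simp [star_eq_zero.mp h', hy i]
    · push_neg at hy
      obtain ⟨i₀, hi₀⟩ := hy
      have hxy := h i₀ i₀
      have hx0 : x i₀ ≠ 0 := by
        intro hx
        rw [hx] at hxy
        simp only [zero_mul] at hxy
        rcases mul_eq_zero.mp hxy.symm with h' | h'
        · exact hi₀ h'
        · exact hi₀ (star_eq_zero.mp h')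
      refine ⟨(y i₀)⁻¹ * x i₀, ?_, fun i => ?_⟩
      · have hnorm : ‖x i₀‖ = ‖y i₀‖ := by
          have := congrArg norm hxy
          rw [norm_mul, norm_mul, norm_star, norm_star] at this
          nlinarith [norm_nonneg (x i₀), norm_nonneg (y i₀)]
        rw [norm_mul, norm_inv, hnorm, inv_mul_cancel₀ (norm_ne_zero_iff.mpr hi₀)]
      · have hs : star (x i₀) ≠ 0 := star_ne_zero.mpr hx0
        apply mul_right_cancel₀ hs
        calc x i * star (x i₀) = y i * star (y i₀) := h i i₀
        _ = y i * ((y i₀)⁻¹ * (y i₀ * star (y i₀))) := by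
              rw [← mul_assoc ((y i₀)⁻¹), inv_mul_cancel₀ hi₀, one_mul]
        _ = y i * ((y i₀)⁻¹ * (x i₀ * star (x i₀))) := by rw [hxy]
        _ = y i * ((y i₀)⁻¹ * x i₀) * star (x i₀) := by
              simp only [mul_assoc]
  · rintro ⟨q, hq, hx⟩ i j
    have hq2 : q * star q = 1 := by
      have h2 : Quaternion.normSq q = 1 := by
        rw [Quaternion.normSq_eq_norm_mul_self, hq, one_mul]
      rw [Quaternion.self_mul_star, h2, Quaternion.coe_one]
    rw [hx i, hx j, star_mul]
    calc y i * q * (star q * star (y j)) = y i * (q * star q) * star (y j) := by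
          simp only [mul_assoc]
    _ = y i * star (y j) := by rw [hq2, mul_one]
end

section
/- Let x ∈ ℍ^d be a pure quaternion vector whose three imaginary component vectors P_i(x), P_j(x), P_k(x) ∈ ℝ^d are linearly independent over ℝ. If q is a unit quaternion such that x·q is also a pure quaternion vector, then q = 1 or q = −1. -/
open Quaternion

/-- If `x` is a pure quaternion vector whose three imaginary component vectors are
linearly independent over `ℝ`, and `q` is a unit quaternion with `x·q` pure, then
`q = 1` or `q = -1`. -/
theorem pure_right_phase_is_sign {d : ℕ} (x : Fin d → ℍ[ℝ])
    (hx : ∀ i, (x i).re = 0)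
    (hli : LinearIndependent ℝ
      ![fun i => (x i).imI, fun i => (x i).imJ, fun i => (x i).imK])
    (q : ℍ[ℝ]) (hq : ‖q‖ = 1) (hpure : ∀ i, (x i * q).re = 0) :
    q = 1 ∨ q = -1 := by
  have hz := Fintype.linearIndependent_iff.mp hli ![q.imI, q.imJ, q.imK] ?_
  · have hI : q.imI = 0 := hz 0
    have hJ : q.imJ = 0 := hz 1
    have hK : q.imK = 0 := hz 2
    have h2 : ‖q‖ ^ 2 = 1 := by rw [hq]; norm_num
    rw [sq, ← Quaternion.normSq_eq_norm_mul_self, Quaternion.normSq_def', hI, hJ, hK] at h2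
    have : (q.re - 1) * (q.re + 1) = 0 := by nlinarith
    rcases mul_eq_zero.mp this with h | h
    · left; ext <;> simp [hI, hJ, hK] <;> linarith
    · right; ext <;> simp [hI, hJ, hK] <;> linarith
  · funext i
    have h := hpure i
    rw [Quaternion.re_mul, hx i] at h
    simp [Fin.sum_univ_three]
    ring_nf
    ring_nf at h
    linarith
end

section
/- Suppose f: ℍ^d → ℝ satisfies a regularity condition at x ∈ ℍ^d with parameters τ, β, ε > 0: for all z with dist(z,x) ≤ ε, Re⟨∇f(z), z − x·φ(z)⟩ ≥ (1/τ)·dist²(z,x) + (1/β)·‖∇f(z)‖², where dist(z,x) = min over unit quaternions w of ‖z − x·w‖ and φ(z) = sign(x*z). If z₀ satisfies dist(z₀,x) ≤ ε and 0 < η ≤ 2/β, then the gradient iterate z₁ = z₀ − η∇f(z₀) satisfies dist²(z₁, x) ≤ (1 − 2η/τ)·dist²(z₀, x); in particular, dist(z₁,x) ≤ ε provided 2η/τ ≤ 1. -/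
open Quaternion Finset
open scoped Classical

/-- The ℓ₂ norm of a quaternion vector. -/
noncomputable def qnrm {d : ℕ} (v : Fin d → ℍ[ℝ]) : ℝ :=
  Real.sqrt (∑ i, ‖v i‖ ^ 2)

/-- The quaternion inner product `a* b = ∑ conj(aᵢ) bᵢ`. -/
noncomputable def qip {d : ℕ} (a b : Fin d → ℍ[ℝ]) : ℍ[ℝ] :=
  ∑ i, star (a i) * b i

/-- The phase of a quaternion: `sign q = q/|q|` for `q ≠ 0`, and `sign 0 = 1`. -/
noncomputable def qsign (q : ℍ[ℝ]) : ℍ[ℝ] :=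
  if q = 0 then 1 else ‖q‖⁻¹ • q

/-- Distance up to a global right quaternion phase factor:
`dist(z,x) = min_{|w|=1} ‖z - x·w‖`. -/
noncomputable def qdist {d : ℕ} (z x : Fin d → ℍ[ℝ]) : ℝ :=
  sInf {r : ℝ | ∃ w : ℍ[ℝ], ‖w‖ = 1 ∧ r = qnrm (fun i => z i - x i * w)}

/- Auxiliary lemmas -/

lemma qn_sq (q : ℍ[ℝ]) : ‖q‖ ^ 2 = normSq q := by
  rw [sq, ← normSq_eq_norm_mul_self]

lemma norm_sub_sq' (a b : ℍ[ℝ]) :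
    ‖a - b‖ ^ 2 = ‖a‖ ^ 2 + ‖b‖ ^ 2 - 2 * (star b * a).re := by
  simp only [qn_sq, normSq_def', Quaternion.re_mul, Quaternion.re_sub,
    Quaternion.imI_sub, Quaternion.imJ_sub, Quaternion.imK_sub,
    Quaternion.re_star, Quaternion.imI_star, Quaternion.imJ_star, Quaternion.imK_star]
  ring

lemma re_le_norm' (q : ℍ[ℝ]) : q.re ≤ ‖q‖ := by
  have h : ‖q‖ ^ 2 = q.re^2 + q.imI^2 + q.imJ^2 + q.imK^2 := by
    rw [qn_sq, normSq_def']
  nlinarith [norm_nonneg q, sq_nonneg q.imI, sq_nonneg q.imJ, sq_nonneg q.imK]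

lemma qsign_norm (q : ℍ[ℝ]) : ‖qsign q‖ = 1 := by
  unfold qsign
  split_ifs with h
  · simp
  · rw [norm_smul, norm_inv, norm_norm, inv_mul_cancel₀ (norm_ne_zero_iff.2 h)]

lemma qsign_re (q : ℍ[ℝ]) : (star (qsign q) * q).re = ‖q‖ := by
  unfold qsign
  split_ifs with h
  · simp [h]
  · rw [Quaternion.star_smul, smul_mul_assoc, Quaternion.re_smul, smul_eq_mul]
    have : (star q * q).re = ‖q‖ ^ 2 := by
      rw [qn_sq, ← normSq_star, Quaternion.normSq_def, star_star]
    rw [this, sq]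
    field_simp

lemma re_sum {ι : Type*} (s : Finset ι) (f : ι → ℍ[ℝ]) :
    (∑ i ∈ s, f i).re = ∑ i ∈ s, (f i).re := by
  induction s using Finset.cons_induction with
  | empty => simp
  | cons a s ha ih => rw [Finset.sum_cons, Finset.sum_cons, Quaternion.re_add, ih]

lemma qnrm_nonneg {d : ℕ} (v : Fin d → ℍ[ℝ]) : 0 ≤ qnrm v := Real.sqrt_nonneg _

lemma qnrm_sq {d : ℕ} (v : Fin d → ℍ[ℝ]) : qnrm v ^ 2 = ∑ i, ‖v i‖ ^ 2 :=
  Real.sq_sqrt (Finset.sum_nonneg fun i _ => sq_nonneg _)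

lemma qnrm_le_of_sq_le {d : ℕ} (u v : Fin d → ℍ[ℝ]) (h : qnrm u ^ 2 ≤ qnrm v ^ 2) :
    qnrm u ≤ qnrm v := by
  rw [qnrm_sq, qnrm_sq] at h
  exact Real.sqrt_le_sqrt h

lemma qexpand {d : ℕ} (z x : Fin d → ℍ[ℝ]) (w : ℍ[ℝ]) (hw : ‖w‖ = 1) :
    qnrm (fun i => z i - x i * w) ^ 2 =
      (∑ i, ‖z i‖ ^ 2) + (∑ i, ‖x i‖ ^ 2) - 2 * (star w * qip x z).re := by
  have step : ∀ i : Fin d, ‖z i - x i * w‖ ^ 2 =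
      ‖z i‖ ^ 2 + ‖x i‖ ^ 2 - 2 * (star w * (star (x i) * z i)).re := by
    intro i
    rw [norm_sub_sq', norm_mul, hw, mul_one, star_mul, mul_assoc]
  rw [qnrm_sq]
  simp only [step]
  rw [Finset.sum_sub_distrib, Finset.sum_add_distrib, ← Finset.mul_sum, ← re_sum,
    ← Finset.mul_sum]
  rfl

lemma qdist_mem {d : ℕ} (z x : Fin d → ℍ[ℝ]) (w : ℍ[ℝ]) (hw : ‖w‖ = 1) :
    qnrm (fun i => z i - x i * w) ∈
      {r : ℝ | ∃ w : ℍ[ℝ], ‖w‖ = 1 ∧ r = qnrm (fun i => z i - x i * w)} :=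
  ⟨w, hw, rfl⟩

lemma qdist_bdd {d : ℕ} (z x : Fin d → ℍ[ℝ]) :
    BddBelow {r : ℝ | ∃ w : ℍ[ℝ], ‖w‖ = 1 ∧ r = qnrm (fun i => z i - x i * w)} :=
  ⟨0, fun r hr => by obtain ⟨w, hw, rfl⟩ := hr; exact qnrm_nonneg _⟩

lemma qdist_le {d : ℕ} (z x : Fin d → ℍ[ℝ]) (w : ℍ[ℝ]) (hw : ‖w‖ = 1) :
    qdist z x ≤ qnrm (fun i => z i - x i * w) :=
  csInf_le (qdist_bdd z x) (qdist_mem z x w hw)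

lemma qdist_nonneg {d : ℕ} (z x : Fin d → ℍ[ℝ]) : 0 ≤ qdist z x :=
  le_csInf ⟨_, qdist_mem z x 1 norm_one⟩
    (fun r hr => by obtain ⟨w, hw, rfl⟩ := hr; exact qnrm_nonneg _)

lemma qdist_eq {d : ℕ} (z x : Fin d → ℍ[ℝ]) :
    qdist z x = qnrm (fun i => z i - x i * qsign (qip x z)) := by
  refine le_antisymm (qdist_le z x _ (qsign_norm _)) ?_
  refine le_csInf ⟨_, qdist_mem z x 1 norm_one⟩ ?_
  rintro r ⟨w, hw, rfl⟩
  refine qnrm_le_of_sq_le _ _ ?_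
  rw [qexpand z x _ (qsign_norm _), qexpand z x w hw, qsign_re]
  have : (star w * qip x z).re ≤ ‖qip x z‖ := by
    calc (star w * qip x z).re ≤ ‖star w * qip x z‖ := re_le_norm' _
    _ = ‖qip x z‖ := by rw [norm_mul, norm_star, hw, one_mul]
  linarith

/-- One gradient step under the regularity condition contracts the distance to the
signal: `dist²(z₁,x) ≤ (1 - 2η/τ) dist²(z₀,x)`, and `z₁` stays in the ε-neighborhood
provided `2η/τ ≤ 1`. -/
theorem regularity_implies_contraction {d : ℕ} (x : Fin d → ℍ[ℝ])
    (g : (Fin d → ℍ[ℝ]) → (Fin d → ℍ[ℝ])) (τ β ε : ℝ)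
    (hτ : 0 < τ) (hβ : 0 < β) (hε : 0 < ε)
    (hreg : ∀ z : Fin d → ℍ[ℝ], qdist z x ≤ ε →
      (qip (g z) (fun i => z i - x i * qsign (qip x z))).re ≥
        (1/τ) * (qdist z x) ^ 2 + (1/β) * (qnrm (g z)) ^ 2)
    (z₀ : Fin d → ℍ[ℝ]) (hz₀ : qdist z₀ x ≤ ε)
    (η : ℝ) (hη : 0 < η) (hηβ : η ≤ 2/β) :
    (qdist (fun i => z₀ i - η • g z₀ i) x) ^ 2 ≤ (1 - 2*η/τ) * (qdist z₀ x) ^ 2 ∧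
      (2*η/τ ≤ 1 → qdist (fun i => z₀ i - η • g z₀ i) x ≤ ε) := by
  set w₀ := qsign (qip x z₀) with hw₀def
  set v₀ : Fin d → ℍ[ℝ] := fun i => z₀ i - x i * w₀ with hv₀def
  set z₁ : Fin d → ℍ[ℝ] := fun i => z₀ i - η • g z₀ i with hz₁def
  have hw₀ : ‖w₀‖ = 1 := qsign_norm _
  have hD₀ : qdist z₀ x = qnrm v₀ := qdist_eq z₀ x
  -- Expansion of the iterate's squared distance candidate
  have hexp : qnrm (fun i => z₁ i - x i * w₀) ^ 2 =
      qnrm v₀ ^ 2 + η ^ 2 * qnrm (g z₀) ^ 2 - 2 * η * (qip (g z₀) v₀).re := by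
    have step : ∀ i : Fin d, ‖z₁ i - x i * w₀‖ ^ 2 =
        ‖v₀ i‖ ^ 2 + η ^ 2 * ‖g z₀ i‖ ^ 2 - 2 * (η * (star (g z₀ i) * v₀ i).re) := by
      intro i
      have h1 : z₁ i - x i * w₀ = v₀ i - η • g z₀ i := by
        simp only [hz₁def, hv₀def]; exact sub_right_comm _ _ _
      rw [h1, norm_sub_sq']
      have h2 : ‖η • g z₀ i‖ ^ 2 = η ^ 2 * ‖g z₀ i‖ ^ 2 := by
        rw [norm_smul, Real.norm_eq_abs, mul_pow, sq_abs]
      have h3 : (star (η • g z₀ i) * v₀ i).re = η * (star (g z₀ i) * v₀ i).re := by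
        rw [Quaternion.star_smul, smul_mul_assoc, Quaternion.re_smul, smul_eq_mul]
      rw [h2, h3]
    have hsum3 : ∑ i, η * (star (g z₀ i) * v₀ i).re = η * (qip (g z₀) v₀).re := by
      rw [← Finset.mul_sum, ← re_sum]; rfl
    rw [qnrm_sq]
    simp only [step]
    rw [Finset.sum_sub_distrib, Finset.sum_add_distrib, ← Finset.mul_sum, ← Finset.mul_sum,
      hsum3, ← qnrm_sq, ← qnrm_sq]
    ring
  have hregz := hreg z₀ hz₀
  rw [hD₀] at hregz hz₀
  have hGnn : (0:ℝ) ≤ qnrm (g z₀) ^ 2 := sq_nonneg _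
  -- the candidate bound
  have hkey : qnrm (fun i => z₁ i - x i * w₀) ^ 2 ≤ (1 - 2*η/τ) * qnrm v₀ ^ 2 := by
    have hineq : (qip (g z₀) v₀).re ≥
        (1/τ) * qnrm v₀ ^ 2 + (1/β) * qnrm (g z₀) ^ 2 := hregz
    have hβ' : η - 2 / β ≤ 0 := by linarith
    have hng : η * (η - 2/β) * qnrm (g z₀) ^ 2 ≤ 0 := by
      nlinarith [mul_nonpos_of_nonneg_of_nonpos hη.le hβ', hGnn]
    have hR : 2*η*((1/τ) * qnrm v₀ ^ 2 + (1/β) * qnrm (g z₀) ^ 2) ≤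
        2*η*(qip (g z₀) v₀).re :=
      mul_le_mul_of_nonneg_left hineq (by linarith)
    rw [hexp]
    ring_nf at hR hng ⊢
    linarith [hR, hng]
  clear_value w₀ v₀
  have hle : qdist z₁ x ≤ qnrm (fun i => z₁ i - x i * w₀) := qdist_le z₁ x w₀ hw₀
  have hdn : 0 ≤ qdist z₁ x := qdist_nonneg _ _
  clear_value z₁
  have hsq : qdist z₁ x ^ 2 ≤ qnrm (fun i => z₁ i - x i * w₀) ^ 2 := by
    have := qnrm_nonneg (fun i => z₁ i - x i * w₀)
    nlinarith
  have main : qdist z₁ x ^ 2 ≤ (1 - 2*η/τ) * qnrm v₀ ^ 2 := le_trans hsq hkey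
  refine ⟨by rw [hD₀]; exact main, fun hcontr => ?_⟩
  have hvnn : 0 ≤ qnrm v₀ := qnrm_nonneg _
  have hpos : 0 < 2*η/τ := by positivity
  have hV2 : qnrm v₀ ^ 2 ≤ ε ^ 2 := pow_le_pow_left₀ hvnn hz₀ 2
  have h1 : (1 - 2*η/τ) * qnrm v₀ ^ 2 ≤ qnrm v₀ ^ 2 := by
    linarith [mul_nonneg hpos.le (sq_nonneg (qnrm v₀))]
  have hq2 : qdist z₁ x ^ 2 ≤ ε ^ 2 := le_trans main (le_trans h1 hV2)
  calc qdist z₁ x = Real.sqrt (qdist z₁ x ^ 2) := (Real.sqrt_sq hdn).symm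
    _ ≤ Real.sqrt (ε ^ 2) := Real.sqrt_le_sqrt hq2
    _ = ε := Real.sqrt_sq hε.le
end
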